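/- Let U = U₀ exp(αX) be an approximate joint triangularizer of the observed matrices {M̂_n} (U₀ an exact joint triangularizer of {M_n}, X skew-symmetric with ‖X‖ = 1, α ≥ 0), and define the estimated eigenvalues λ̂_i(M̂_n) = [Uᵀ M̂_n U]_{ii} and the exact eigenvalues λ_i(M_n) = [U₀ᵀ M_n U₀]_{ii}. Then there is a constant C > 0 depending only on the M_n such that for all n = 1,…,N and i = 1,…,d: |λ̂_i(M̂_n) − λ_i(M_n)| ≤ 2α‖M_n‖ + σ‖W_n‖ + C α². -/

import Mathlib

open Matrix Kronecker BigOperators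

noncomputable section

/-- Square real matrices. -/
abbrev Mat (d : ℕ) := Matrix (Fin d) (Fin d) ℝ

/-- Strictly lower-triangular part: `[low A]_{ij} = A_{ij}` if `i > j`, else `0`. -/
def lowPart {d : ℕ} (A : Mat d) : Mat d :=
  Matrix.of fun i j => if (j : ℕ) < (i : ℕ) then A i j else 0

/-- Frobenius norm. -/
def frob {m n : Type*} [Fintype m] [Fintype n] (A : Matrix m n ℝ) : ℝ :=
  Real.sqrt (∑ i, ∑ j, (A i j) ^ 2)

/-- Euclidean norm of a vector. -/
def enorm' {m : Type*} [Fintype m] (v : m → ℝ) : ℝ :=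
  Real.sqrt (∑ i, (v i) ^ 2)

/-- Largest singular value. -/
def sigMax {m n : Type*} [Fintype m] [Fintype n] (A : Matrix m n ℝ) : ℝ :=
  sSup {r | ∃ x : n → ℝ, enorm' x = 1 ∧ r = enorm' (A.mulVec x)}

/-- Smallest singular value. -/
def sigMin {m n : Type*} [Fintype m] [Fintype n] (A : Matrix m n ℝ) : ℝ :=
  sInf {r | ∃ x : n → ℝ, enorm' x = 1 ∧ r = enorm' (A.mulVec x)}

/-- Spectral norm (largest singular value). -/
def specNorm {m n : Type*} [Fintype m] [Fintype n] (A : Matrix m n ℝ) : ℝ := sigMax A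

/-- Condition number `κ(A) = σ_max(A)/σ_min(A)`. -/
def condNum {m n : Type*} [Fintype m] [Fintype n] (A : Matrix m n ℝ) : ℝ :=
  sigMax A / sigMin A

/-- Matrix exponential. -/
def matExp {d : ℕ} (A : Mat d) : Mat d := ∑' k : ℕ, ((k.factorial : ℝ))⁻¹ • A ^ k

/-- Column-wise vectorization: index `(j, i)` holds the `(i, j)` entry. -/
def vecM {d : ℕ} (A : Mat d) : Fin d × Fin d → ℝ := fun p => A p.2 p.1

/-- Inverse of the column-wise vectorization. -/
def matM {d : ℕ} (v : Fin d × Fin d → ℝ) : Mat d := Matrix.of fun i j => v (j, i)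

/-- The `d² × d²` diagonal 0/1 matrix `Low` with `Low (vec A) = vec (low A)`. -/
def lowOp (d : ℕ) : Matrix (Fin d × Fin d) (Fin d × Fin d) ℝ :=
  Matrix.diagonal fun p => if (p.1 : ℕ) < (p.2 : ℕ) then 1 else 0

/-- `P` is a valid `P_low` projector: `P Pᵀ = 1` and `Pᵀ P = Low`. -/
def IsPlow {d k : ℕ} (P : Matrix (Fin k) (Fin d × Fin d) ℝ) : Prop :=
  P * Pᵀ = 1 ∧ Pᵀ * P = lowOp d

/-- Orthogonal matrix. -/
def IsOrtho {d : ℕ} (U : Mat d) : Prop := Uᵀ * U = 1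

/-- Skew-symmetric matrix. -/
def IsSkew {d : ℕ} (X : Mat d) : Prop := Xᵀ = -X

/-- Matrix commutator. -/
def mcomm {d : ℕ} (A B : Mat d) : Mat d := A * B - B * A

/-- `U₀` is an exact joint triangularizer of the family `M`. -/
def ExactTriang {d N : ℕ} (U₀ : Mat d) (M : Fin N → Mat d) : Prop :=
  IsOrtho U₀ ∧ ∀ n, lowPart (U₀ᵀ * M n * U₀) = 0

/-- The joint triangularization loss `L(U) = Σₙ ‖low(Uᵀ M̂ₙ U)‖²`. -/
def Loss {d N : ℕ} (Mh : Fin N → Mat d) (U : Mat d) : ℝ :=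
  ∑ n, (frob (lowPart (Uᵀ * Mh n * U))) ^ 2

/-- Stationary point of the loss on the orthogonal group: the Riemannian
gradient vanishes, i.e. all directional derivatives along skew directions vanish. -/
def IsStationary' {d N : ℕ} (Mh : Fin N → Mat d) (U : Mat d) : Prop :=
  IsOrtho U ∧ ∀ X : Mat d, IsSkew X →
    deriv (fun t : ℝ => Loss Mh (U * matExp (t • X))) 0 = 0

/-- The operator `t̃ = P_low (1 ⊗ Aᵀ − A ⊗ 1) P_lowᵀ`. -/
def ttil {d k : ℕ} (P : Matrix (Fin k) (Fin d × Fin d) ℝ) (A : Mat d) :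
    Matrix (Fin k) (Fin k) ℝ :=
  P * ((1 : Mat d) ⊗ₖ Aᵀ - A ⊗ₖ (1 : Mat d)) * Pᵀ

/-- The joint eigengap `γ = min_{i<i'} Σₙ (Λ_{ni} − Λ_{ni'})²`. -/
def gapMin {d N : ℕ} (Λ : Fin N → Fin d → ℝ) : ℝ :=
  sInf {r | ∃ i i' : Fin d, i < i' ∧ r = ∑ n, (Λ n i - Λ n i') ^ 2}

/-!
With `E = exp(αX)` and `A = U₀ᵀ Mₙ U₀`, the error is `(EᵀAE - A)ᵢᵢ + σ ((U₀E)ᵀ Wₙ (U₀E))ᵢᵢ`.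
The Frobenius norm is invariant under multiplication by orthogonal matrices on either side, so the
noise term is at most `σ‖Wₙ‖`, and `EᵀAE - A = (EᵀA)(E - 1) + (E - 1)ᵀA` gives
`‖EᵀAE - A‖ ≤ 2‖A‖‖E - 1‖`, besides the trivial `‖EᵀAE - A‖ ≤ 2‖A‖`. Summing the exponential
series, `‖exp(αX) - 1‖ ≤ e^α - 1 ≤ α + α²` when `α ≤ 1`, while for `α ≥ 1` the trivial bound is
already below `2α‖A‖`. Hence `C = 2 (∑ₙ ‖Mₙ‖ + 1)` works.
-/

open NormedSpace Nat

theorem norm_exp_sub_one_le {𝔸 : Type*} [NormedRing 𝔸] [NormedAlgebra ℝ 𝔸] [CompleteSpace 𝔸]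
    (x : 𝔸) : ‖exp x - 1‖ ≤ Real.exp ‖x‖ - 1 := by
  have hx : HasSum (fun n => ((n + 1)! : ℝ)⁻¹ • x ^ (n + 1)) (exp x - 1) := by
    simpa using (hasSum_nat_add_iff' 1).mpr (exp_series_hasSum_exp' (𝕂 := ℝ) x)
  have hr : HasSum (fun n => ((n + 1)! : ℝ)⁻¹ • ‖x‖ ^ (n + 1)) (Real.exp ‖x‖ - 1) := by
    simpa [Real.exp_eq_exp_ℝ] using
      (hasSum_nat_add_iff' 1).mpr (exp_series_hasSum_exp' (𝕂 := ℝ) ‖x‖)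
  refine hx.norm_le_of_bounded hr fun n => ?_
  rw [norm_smul, Real.norm_of_nonneg (by positivity), smul_eq_mul]
  gcongr
  exact norm_pow_le' x n.succ_pos

theorem Real.min_one_exp_sub_one_le {x : ℝ} (hx : 0 ≤ x) :
    min 1 (Real.exp x - 1) ≤ x + x ^ 2 := by
  rcases le_total x 1 with hx1 | hx1
  · have := Real.abs_exp_sub_one_sub_id_le (x := x) (by rwa [abs_of_nonneg hx])
    linarith [min_le_right 1 (Real.exp x - 1), le_abs_self (Real.exp x - 1 - x)]
  · nlinarith [min_le_left 1 (Real.exp x - 1)]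

theorem IsOrtho.mul {d : ℕ} {U V : Mat d} (hU : IsOrtho U) (hV : IsOrtho V) : IsOrtho (U * V) := by
  rw [IsOrtho, transpose_mul, Matrix.mul_assoc, ← Matrix.mul_assoc Uᵀ, hU, Matrix.one_mul, hV]

theorem IsOrtho.transpose {d : ℕ} {U : Mat d} (hU : IsOrtho U) : IsOrtho Uᵀ := by
  rw [IsOrtho, transpose_transpose]
  exact mul_eq_one_comm.mp hU

theorem IsSkew.smul {d : ℕ} {X : Mat d} (hX : IsSkew X) (a : ℝ) : IsSkew (a • X) := by
  rw [IsSkew, transpose_smul, hX, smul_neg]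

theorem matExp_eq_exp {d : ℕ} (A : Mat d) : matExp A = exp A := by
  rw [exp_eq_tsum ℝ, matExp]

theorem IsSkew.isOrtho_matExp {d : ℕ} {X : Mat d} (hX : IsSkew X) : IsOrtho (matExp X) := by
  rw [IsOrtho, matExp_eq_exp, ← Matrix.exp_transpose, hX,
    ← Matrix.exp_add_of_commute _ _ (Commute.refl X).neg_left, neg_add_cancel, exp_zero]

theorem diag_conj_add_smul_sub_eq {d : ℕ} (A W U₀ E : Mat d) (σ : ℝ) (i : Fin d) :
    ((U₀ * E)ᵀ * (A + σ • W) * (U₀ * E)) i i - (U₀ᵀ * A * U₀) i i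
      = (Eᵀ * (U₀ᵀ * A * U₀) * E - U₀ᵀ * A * U₀) i i + σ * ((U₀ * E)ᵀ * W * (U₀ * E)) i i := by
  simp only [transpose_mul, Matrix.mul_add, Matrix.add_mul, Matrix.mul_smul, Matrix.smul_mul,
    Matrix.mul_assoc, Matrix.add_apply, Matrix.sub_apply, Matrix.smul_apply, smul_eq_mul]
  ring

section Frobenius

attribute [local instance] Matrix.frobeniusSeminormedAddCommGroup
  Matrix.frobeniusNormedAddCommGroup Matrix.frobeniusNormedRing Matrix.frobeniusNormedAlgebra

variable {l m n : Type*} [Fintype l] [Fintype m] [Fintype n]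

theorem frob_eq_norm (A : Matrix m n ℝ) : frob A = ‖A‖ := by
  rw [frobenius_norm_def, frob, Real.sqrt_eq_rpow]
  simp only [Real.norm_eq_abs, Real.rpow_two, sq_abs]

theorem frob_nonneg (A : Matrix m n ℝ) : 0 ≤ frob A := Real.sqrt_nonneg _

theorem abs_apply_le_frob (A : Matrix m n ℝ) (i : m) (j : n) : |A i j| ≤ frob A := by
  rw [frob, ← Real.sqrt_sq_eq_abs]
  gcongr
  calc A i j ^ 2 ≤ ∑ j', A i j' ^ 2 :=
        Finset.single_le_sum (fun _ _ => sq_nonneg _) (Finset.mem_univ j)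
    _ ≤ ∑ i', ∑ j', A i' j' ^ 2 :=
        Finset.single_le_sum (f := fun i' => ∑ j', A i' j' ^ 2)
          (fun _ _ => Finset.sum_nonneg fun _ _ => sq_nonneg _) (Finset.mem_univ i)

theorem sum_sum_sq_eq_trace_transpose_mul (A : Matrix m n ℝ) :
    ∑ i, ∑ j, A i j ^ 2 = trace (Aᵀ * A) := by
  rw [trace, Finset.sum_comm]
  simp [mul_apply, sq]

theorem norm_mul_of_transpose_mul_self_eq_one [DecidableEq m] {U : Matrix l m ℝ}
    (hU : Uᵀ * U = 1) (B : Matrix m n ℝ) : ‖U * B‖ = ‖B‖ := by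
  rw [← frob_eq_norm, ← frob_eq_norm, frob, frob, sum_sum_sq_eq_trace_transpose_mul,
    sum_sum_sq_eq_trace_transpose_mul, transpose_mul, Matrix.mul_assoc, ← Matrix.mul_assoc Uᵀ, hU,
    Matrix.one_mul]

theorem norm_mul_of_mul_transpose_eq_one [DecidableEq n] {U : Matrix n l ℝ}
    (hU : U * Uᵀ = 1) (B : Matrix m n ℝ) : ‖B * U‖ = ‖B‖ := by
  rw [← frobenius_norm_transpose, transpose_mul,
    norm_mul_of_transpose_mul_self_eq_one (by rwa [transpose_transpose]), frobenius_norm_transpose]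

variable {d : ℕ}

theorem IsOrtho.norm_conj {U : Mat d} (hU : IsOrtho U) (A : Mat d) : ‖Uᵀ * A * U‖ = ‖A‖ := by
  rw [norm_mul_of_mul_transpose_eq_one (mul_eq_one_comm.mp hU),
    norm_mul_of_transpose_mul_self_eq_one hU.transpose]

theorem IsOrtho.norm_conj_sub_le {E : Mat d} (hE : IsOrtho E) (A : Mat d) :
    ‖Eᵀ * A * E - A‖ ≤ 2 * ‖A‖ * ‖E - 1‖ := by
  have hsplit : Eᵀ * A * E - A = Eᵀ * A * (E - 1) + (E - 1)ᵀ * A := by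
    simp only [Matrix.mul_sub, Matrix.mul_one, transpose_sub, transpose_one, Matrix.sub_mul,
      Matrix.one_mul]
    abel
  have hEA : ‖Eᵀ * A‖ = ‖A‖ := norm_mul_of_transpose_mul_self_eq_one hE.transpose A
  calc ‖Eᵀ * A * E - A‖ ≤ ‖Eᵀ * A‖ * ‖E - 1‖ + ‖(E - 1)ᵀ‖ * ‖A‖ := by
        rw [hsplit]
        exact (norm_add_le _ _).trans
          (add_le_add (frobenius_norm_mul _ _) (frobenius_norm_mul _ _))
    _ = 2 * ‖A‖ * ‖E - 1‖ := by rw [hEA, frobenius_norm_transpose]; ring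

theorem IsOrtho.abs_diag_conj_sub_le {E : Mat d} (hE : IsOrtho E) (A : Mat d) (i : Fin d) :
    |(Eᵀ * A * E - A) i i| ≤ 2 * ‖A‖ * min 1 ‖E - 1‖ := by
  have hentry := abs_apply_le_frob (Eᵀ * A * E - A) i i
  rw [frob_eq_norm] at hentry
  rcases min_cases 1 ‖E - 1‖ with ⟨hmin, -⟩ | ⟨hmin, -⟩ <;> rw [hmin]
  · linarith [norm_sub_le (Eᵀ * A * E) A, hE.norm_conj A]
  · linarith [hE.norm_conj_sub_le A]

theorem norm_matExp_sub_one_le (X : Mat d) : ‖matExp X - 1‖ ≤ Real.exp ‖X‖ - 1 := by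
  rw [matExp_eq_exp]
  exact norm_exp_sub_one_le X

theorem abs_diag_conj_matExp_add_smul_sub_le {A W U₀ X : Mat d} (hU₀ : IsOrtho U₀)
    (hX : IsSkew X) (hXn : frob X = 1) {α σ : ℝ} (hα : 0 ≤ α) (hσ : 0 ≤ σ) (i : Fin d) :
    |((U₀ * matExp (α • X))ᵀ * (A + σ • W) * (U₀ * matExp (α • X))) i i - (U₀ᵀ * A * U₀) i i|
      ≤ 2 * frob A * (α + α ^ 2) + σ * frob W := by
  set E := matExp (α • X)
  have hE : IsOrtho E := (hX.smul α).isOrtho_matExp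
  have hE1 : min 1 ‖E - 1‖ ≤ α + α ^ 2 := by
    refine (min_le_min_left 1 (norm_matExp_sub_one_le _)).trans ?_
    rw [norm_smul, ← frob_eq_norm, hXn, Real.norm_of_nonneg hα, mul_one]
    exact Real.min_one_exp_sub_one_le hα
  have hsignal := hE.abs_diag_conj_sub_le (U₀ᵀ * A * U₀) i
  rw [hU₀.norm_conj] at hsignal
  have hnoise : |σ * ((U₀ * E)ᵀ * W * (U₀ * E)) i i| ≤ σ * ‖W‖ := by
    rw [abs_mul, abs_of_nonneg hσ, ← (hU₀.mul hE).norm_conj W, ← frob_eq_norm]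
    exact mul_le_mul_of_nonneg_left (abs_apply_le_frob _ i i) hσ
  rw [diag_conj_add_smul_sub_eq, frob_eq_norm, frob_eq_norm]
  calc _ ≤ _ := abs_add_le _ _
    _ ≤ 2 * ‖A‖ * min 1 ‖E - 1‖ + σ * ‖W‖ := add_le_add hsignal hnoise
    _ ≤ 2 * ‖A‖ * (α + α ^ 2) + σ * ‖W‖ := by gcongr

end Frobenius

theorem eigenvalue_estimation_bound_general {d N : ℕ} (M : Fin N → Mat d) :
    ∃ C > (0 : ℝ), ∀ σ : ℝ, 0 < σ → ∀ W : Fin N → Mat d,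
      ∀ U₀ X : Mat d, ∀ α : ℝ,
        ExactTriang U₀ M → IsSkew X → frob X = 1 → 0 ≤ α →
        ∀ n i,
          |((U₀ * matExp (α • X))ᵀ * (M n + σ • W n) * (U₀ * matExp (α • X))) i i -
              (U₀ᵀ * M n * U₀) i i| ≤
            2 * α * frob (M n) + σ * frob (W n) + C * α ^ 2 := by
  have hsum : 0 ≤ ∑ k, frob (M k) := Finset.sum_nonneg fun k _ => frob_nonneg (M k)
  refine ⟨2 * (∑ k, frob (M k) + 1), by positivity, ?_⟩
  intro σ hσ W U₀ X α hU₀ hX hXn hα n i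
  have hMn : frob (M n) ≤ ∑ k, frob (M k) :=
    Finset.single_le_sum (fun k _ => frob_nonneg (M k)) (Finset.mem_univ n)
  have hbound :=
    abs_diag_conj_matExp_add_smul_sub_le (A := M n) (W := W n) hU₀.1 hX hXn hα hσ.le i
  nlinarith [mul_le_mul_of_nonneg_right hMn (sq_nonneg α), sq_nonneg α]

/-- perturbation bound on the estimated joint eigenvalues
(the diagonal entries of `Uᵀ M̂ₙ U` with `U = U₀ exp(αX)`). -/
theorem eigenvalue_estimation_bound {d N : ℕ} (V : Mat d) (hV : IsUnit V)
    (Λ : Fin N → Fin d → ℝ) (M : Fin N → Mat d)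
    (hM : ∀ n, M n = V * Matrix.diagonal (Λ n) * V⁻¹) :
    ∃ C > (0 : ℝ), ∀ σ : ℝ, 0 < σ → ∀ W : Fin N → Mat d,
      ∀ U₀ X : Mat d, ∀ α : ℝ,
        ExactTriang U₀ M → IsSkew X → frob X = 1 → 0 ≤ α →
        ∀ n i,
          |((U₀ * matExp (α • X))ᵀ * (M n + σ • W n) * (U₀ * matExp (α • X))) i i -
              (U₀ᵀ * M n * U₀) i i| ≤
            2 * α * frob (M n) + σ * frob (W n) + C * α ^ 2 :=
  eigenvalue_estimation_bound_general M
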